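/- Let ν be a Borel probability measure on ℝ^d and let μ > 0, σ > 0. Define p(y) = ∫ (2πσ²)^{−d/2} exp(−‖y − μx‖²/(2σ²)) ν(dx) for y ∈ ℝ^d. Then 0 < p(y) < ∞ for every y, p is differentiable on ℝ^d, the vector m(y) := [∫ x exp(−‖y − μx‖²/(2σ²)) ν(dx)] / [∫ exp(−‖y − μx‖²/(2σ²)) ν(dx)] is well defined, and ∇ log p(y) = (μ m(y) − y)/σ² for every y ∈ ℝ^d. -/

import Mathlib

open MeasureTheory Real

noncomputable section

/-- Euclidean space `ℝ^d`. -/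
abbrev Euc (d : ℕ) : Type := EuclideanSpace ℝ (Fin d)

/-- The unnormalised Gaussian kernel `exp(−‖y − μx‖²/(2σ²))`. -/
def gKer (d : ℕ) (μ σ : ℝ) (y x : Euc d) : ℝ :=
  Real.exp (-‖y - μ • x‖ ^ 2 / (2 * σ ^ 2))

/-- The Gaussian-smoothed density `p(y) = ∫ (2πσ²)^{−d/2} exp(−‖y − μx‖²/(2σ²)) ν(dx)`. -/
def gDens (d : ℕ) (μ σ : ℝ) (ν : Measure (Euc d)) (y : Euc d) : ℝ :=
  ∫ x, (2 * Real.pi * σ ^ 2) ^ (-(d : ℝ) / 2) * gKer d μ σ y x ∂ν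

/-- The posterior mean `m(y) = (∫ x exp(−‖y−μx‖²/(2σ²)) ν(dx)) / (∫ exp(−‖y−μx‖²/(2σ²)) ν(dx))`. -/
def gPostMean (d : ℕ) (μ σ : ℝ) (ν : Measure (Euc d)) (y : Euc d) : Euc d :=
  (∫ x, gKer d μ σ y x ∂ν)⁻¹ • ∫ x, gKer d μ σ y x • x ∂ν

lemma key_bound {σ : ℝ} (hσ : 0 < σ) (t : ℝ) :
    t * Real.exp (-t ^ 2 / (2 * σ ^ 2)) ≤ σ := by
  have h1 := Real.add_one_le_exp (t ^ 2 / (2 * σ ^ 2))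
  have h2 : (0:ℝ) < Real.exp (t ^ 2 / (2 * σ ^ 2)) := Real.exp_pos _
  rw [show -t ^ 2 / (2 * σ ^ 2) = -(t ^ 2 / (2 * σ ^ 2)) by ring, Real.exp_neg,
    mul_inv_le_iff₀ h2]
  have hs2 : (0:ℝ) < σ ^ 2 := by positivity
  have h3 : σ * (t ^ 2 / (2 * σ ^ 2) + 1) ≤ σ * Real.exp (t ^ 2 / (2 * σ ^ 2)) :=
    mul_le_mul_of_nonneg_left h1 hσ.le
  have h4 : σ * (t ^ 2 / (2 * σ ^ 2) + 1) = t ^ 2 / (2 * σ) + σ := by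
    field_simp
  have h5 : t ≤ t ^ 2 / (2 * σ) + σ := by
    rw [div_add' _ _ _ (by positivity : (2:ℝ) * σ ≠ 0), le_div_iff₀ (by positivity)]
    nlinarith [sq_nonneg (t - σ)]
  linarith

lemma gKer_pos (d : ℕ) (μ σ : ℝ) (y x : Euc d) : 0 < gKer d μ σ y x := Real.exp_pos _

lemma gKer_le_one (d : ℕ) (μ σ : ℝ) (hσ : 0 < σ) (y x : Euc d) : gKer d μ σ y x ≤ 1 := by
  have : -‖y - μ • x‖ ^ 2 / (2 * σ ^ 2) ≤ 0 :=
    div_nonpos_of_nonpos_of_nonneg (neg_nonpos.mpr (by positivity)) (by positivity)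
  simpa [gKer] using Real.exp_le_exp.mpr this |>.trans_eq Real.exp_zero

lemma gKer_cont (d : ℕ) (μ σ : ℝ) (y : Euc d) :
    Continuous (fun x => gKer d μ σ y x) := by
  unfold gKer; fun_prop

def gDer (d : ℕ) (μ σ : ℝ) (y x : Euc d) : Euc d :=
  (σ ^ 2)⁻¹ • gKer d μ σ y x • (μ • x - y)

lemma gDer_cont (d : ℕ) (μ σ : ℝ) (y : Euc d) :
    Continuous (fun x => gDer d μ σ y x) := by
  unfold gDer gKer; fun_prop

lemma gDer_norm_le (d : ℕ) (μ σ : ℝ) (hσ : 0 < σ) (y x : Euc d) :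
    ‖gDer d μ σ y x‖ ≤ σ⁻¹ := by
  have h1 : ‖gDer d μ σ y x‖ = (σ ^ 2)⁻¹ * (gKer d μ σ y x * ‖μ • x - y‖) := by
    rw [gDer, norm_smul, norm_smul, Real.norm_eq_abs, Real.norm_eq_abs,
      abs_of_pos (gKer_pos d μ σ y x), abs_of_pos (by positivity : (0:ℝ) < (σ^2)⁻¹)]
  rw [h1, norm_sub_rev]
  have h2 : ‖y - μ • x‖ * gKer d μ σ y x ≤ σ := key_bound hσ _
  calc (σ ^ 2)⁻¹ * (gKer d μ σ y x * ‖y - μ • x‖) ≤ (σ ^ 2)⁻¹ * σ := by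
        rw [mul_comm (gKer d μ σ y x)]
        exact mul_le_mul_of_nonneg_left h2 (by positivity)
    _ = σ⁻¹ := by field_simp

lemma hasFDerivAt_gKer (d : ℕ) (μ σ : ℝ) (hσ : 0 < σ) (y x : Euc d) :
    HasFDerivAt (fun z => gKer d μ σ z x) (innerSL ℝ (gDer d μ σ y x)) y := by
  have h1 : HasFDerivAt (fun z : Euc d => z - μ • x) (ContinuousLinearMap.id ℝ (Euc d)) y :=
    (hasFDerivAt_id y).sub_const _
  have h2 := h1.norm_sq
  have h3 := h2.const_mul (-(2 * σ ^ 2)⁻¹)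
  have h4 := (Real.hasDerivAt_exp (-(2 * σ ^ 2)⁻¹ * ‖y - μ • x‖ ^ 2)).comp_hasFDerivAt y h3
  have he : ∀ z : Euc d, -(2 * σ ^ 2)⁻¹ * ‖z - μ • x‖ ^ 2 = -‖z - μ • x‖ ^ 2 / (2 * σ ^ 2) := by
    intro z; ring
  simp only [he] at h4
  refine h4.congr_fderiv (Eq.symm ?_)
  ext w
  simp only [innerSL_apply_apply, ContinuousLinearMap.smul_apply, ContinuousLinearMap.coe_smul',
    Pi.smul_apply, ContinuousLinearMap.coe_comp', Function.comp_apply,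
    ContinuousLinearMap.coe_id', id_eq, gDer, gKer, smul_eq_mul]
  rw [real_inner_smul_left, real_inner_smul_left]
  have hne : (inner ℝ (μ • x - y) w : ℝ) = -(inner ℝ (y - μ • x) w : ℝ) := by
    rw [← inner_neg_left]; congr 1; abel
  rw [hne, nsmul_eq_mul]
  have hσ2 : (σ:ℝ) ^ 2 ≠ 0 := by positivity
  field_simp
  ring

variable {d : ℕ} {μ σ : ℝ} {ν : Measure (Euc d)}

lemma integrable_gKer [IsProbabilityMeasure ν] (hσ : 0 < σ) (y : Euc d) :
    Integrable (fun x => gKer d μ σ y x) ν := by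
  refine (integrable_const (1:ℝ)).mono' ((gKer_cont d μ σ y).aestronglyMeasurable) ?_
  exact ae_of_all _ fun x => by
    rw [Real.norm_eq_abs, abs_of_pos (gKer_pos d μ σ y x)]; exact gKer_le_one d μ σ hσ y x

lemma integrable_gKer_smul [IsProbabilityMeasure ν] (hμ : 0 < μ) (hσ : 0 < σ) (y : Euc d) :
    Integrable (fun x => gKer d μ σ y x • x) ν := by
  refine (integrable_const ((σ + ‖y‖)/μ)).mono'
    (((gKer_cont d μ σ y).smul continuous_id).aestronglyMeasurable) ?_
  refine ae_of_all _ fun x => ?_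
  rw [norm_smul, Real.norm_eq_abs, abs_of_pos (gKer_pos d μ σ y x), le_div_iff₀ hμ]
  have h1 : μ * ‖x‖ ≤ ‖y - μ • x‖ + ‖y‖ := by
    have : μ * ‖x‖ = ‖μ • x‖ := by rw [norm_smul, Real.norm_eq_abs, abs_of_pos hμ]
    rw [this]
    calc ‖μ • x‖ = ‖(μ • x - y) + y‖ := by congr 1; abel
      _ ≤ ‖μ • x - y‖ + ‖y‖ := norm_add_le _ _
      _ = ‖y - μ • x‖ + ‖y‖ := by rw [norm_sub_rev]
  have h2 : gKer d μ σ y x * ‖y - μ • x‖ ≤ σ := by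
    rw [mul_comm]; exact key_bound hσ _
  have h3 : gKer d μ σ y x * ‖y‖ ≤ ‖y‖ :=
    mul_le_of_le_one_left (norm_nonneg y) (gKer_le_one d μ σ hσ y x)
  calc gKer d μ σ y x * ‖x‖ * μ = gKer d μ σ y x * (μ * ‖x‖) := by ring
    _ ≤ gKer d μ σ y x * (‖y - μ • x‖ + ‖y‖) :=
        mul_le_mul_of_nonneg_left h1 (gKer_pos d μ σ y x).le
    _ = gKer d μ σ y x * ‖y - μ • x‖ + gKer d μ σ y x * ‖y‖ := by ring
    _ ≤ σ + ‖y‖ := add_le_add h2 h3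

lemma integrable_gDer [IsProbabilityMeasure ν] (hσ : 0 < σ) (y : Euc d) :
    Integrable (fun x => gDer d μ σ y x) ν := by
  refine (integrable_const σ⁻¹).mono' ((gDer_cont d μ σ y).aestronglyMeasurable) ?_
  exact ae_of_all _ fun x => gDer_norm_le d μ σ hσ y x

lemma integral_gKer_pos [IsProbabilityMeasure ν] (hσ : 0 < σ) (y : Euc d) :
    0 < ∫ x, gKer d μ σ y x ∂ν := by
  rw [integral_pos_iff_support_of_nonneg (fun x => (gKer_pos d μ σ y x).le)
    (integrable_gKer hσ y)]
  have hsupp : Function.support (fun x => gKer d μ σ y x) = Set.univ := by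
    ext x; simp [Function.mem_support, (gKer_pos d μ σ y x).ne']
  rw [hsupp, measure_univ]
  exact one_pos

lemma hasFDerivAt_I0 [IsProbabilityMeasure ν] (hσ : 0 < σ) (y : Euc d) :
    HasFDerivAt (fun z => ∫ x, gKer d μ σ z x ∂ν)
      (innerSL ℝ (∫ x, gDer d μ σ y x ∂ν)) y := by
  have key := hasFDerivAt_integral_of_dominated_of_fderiv_le
    (F := fun z x => gKer d μ σ z x) (F' := fun z x => innerSL ℝ (gDer d μ σ z x))
    (bound := fun _ => σ⁻¹) (μ := ν) (x₀ := y) (Metric.ball_mem_nhds y one_pos)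
    (Filter.Eventually.of_forall fun z => (gKer_cont d μ σ z).aestronglyMeasurable)
    (integrable_gKer hσ y)
    (((innerSL ℝ).continuous.comp (gDer_cont d μ σ y)).aestronglyMeasurable)
    (ae_of_all _ fun x z _ => by
      rw [innerSL_apply_norm]; exact gDer_norm_le d μ σ hσ z x)
    (integrable_const _)
    (ae_of_all _ fun x z _ => hasFDerivAt_gKer d μ σ hσ z x)
  have hint : Integrable (fun x => gDer d μ σ y x) ν := integrable_gDer hσ y
  have hswap : ∫ x, innerSL ℝ (gDer d μ σ y x) ∂ν = innerSL ℝ (∫ x, gDer d μ σ y x ∂ν) := by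
    have hintF : Integrable (fun x => innerSL ℝ (gDer d μ σ y x)) ν := by
      refine (integrable_const σ⁻¹).mono'
        (((innerSL ℝ).continuous.comp (gDer_cont d μ σ y)).aestronglyMeasurable) ?_
      exact ae_of_all _ fun x => by
        rw [innerSL_apply_norm]; exact gDer_norm_le d μ σ hσ y x
    ext w
    rw [ContinuousLinearMap.integral_apply hintF]
    have hw : ∀ x : Euc d, (innerSL ℝ (gDer d μ σ y x)) w
        = (inner ℝ w (gDer d μ σ y x) : ℝ) := fun x => by
      rw [innerSL_apply_apply]; exact real_inner_comm _ _
    simp_rw [hw, integral_inner hint w]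
    rw [innerSL_apply_apply]; exact real_inner_comm _ _
  rwa [hswap] at key

lemma integral_gDer_eq [IsProbabilityMeasure ν] (hμ : 0 < μ) (hσ : 0 < σ) (y : Euc d) :
    (∫ x, gDer d μ σ y x ∂ν)
      = (σ ^ 2)⁻¹ • (μ • (∫ x, gKer d μ σ y x • x ∂ν) - (∫ x, gKer d μ σ y x ∂ν) • y) := by
  have h1 : (fun x => gDer d μ σ y x)
      = fun x => (σ ^ 2)⁻¹ • (μ • (gKer d μ σ y x • x) - gKer d μ σ y x • y) := by
    funext x
    rw [gDer, smul_sub]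
    congr 1
    rw [smul_comm]
  rw [h1, integral_smul]
  congr 1
  have hA : Integrable (fun a : Euc d => μ • (gKer d μ σ y a • a)) ν :=
    (integrable_gKer_smul hμ hσ y).smul μ
  have hB : Integrable (fun a : Euc d => gKer d μ σ y a • y) ν :=
    (integrable_gKer hσ y).smul_const y
  rw [integral_sub hA hB, integral_smul, integral_smul_const]

/-- Tweedie's formula. For any Borel probability measure `ν` on `ℝ^d` and
`μ, σ > 0`: the Gaussian-smoothed density `p` is everywhere finite (the kernel is integrable)
and positive, `p` is differentiable, the posterior mean is well defined, and
`∇ log p(y) = (μ m(y) − y)/σ²`. -/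
theorem tweedie_formula (d : ℕ) (μ σ : ℝ) (hμ : 0 < μ) (hσ : 0 < σ)
    (ν : Measure (Euc d)) [IsProbabilityMeasure ν] :
    (∀ y : Euc d, Integrable (fun x => gKer d μ σ y x) ν) ∧
    (∀ y : Euc d, 0 < gDens d μ σ ν y) ∧
    Differentiable ℝ (gDens d μ σ ν) ∧
    (∀ y : Euc d, Integrable (fun x => gKer d μ σ y x • x) ν) ∧
    (∀ y : Euc d, (∫ x, gKer d μ σ y x ∂ν) ≠ 0) ∧
    (∀ y : Euc d,
      gradient (fun z => Real.log (gDens d μ σ ν z)) y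
        = (σ ^ 2)⁻¹ • (μ • gPostMean d μ σ ν y - y)) := by
  have hC : 0 < (2 * Real.pi * σ ^ 2) ^ (-(d : ℝ) / 2) :=
    Real.rpow_pos_of_pos (by positivity) _
  have hI0 : ∀ y : Euc d, 0 < ∫ x, gKer d μ σ y x ∂ν := fun y => integral_gKer_pos hσ y
  have hDens : ∀ y : Euc d, gDens d μ σ ν y
      = (2 * Real.pi * σ ^ 2) ^ (-(d : ℝ) / 2) * ∫ x, gKer d μ σ y x ∂ν := by
    intro y; rw [gDens, integral_const_mul]
  refine ⟨fun y => integrable_gKer hσ y, ?_, ?_, fun y => integrable_gKer_smul hμ hσ y,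
    fun y => (hI0 y).ne', ?_⟩
  · intro y; rw [hDens y]; exact mul_pos hC (hI0 y)
  · have heq : gDens d μ σ ν
        = fun y => (2 * Real.pi * σ ^ 2) ^ (-(d : ℝ) / 2) * ∫ x, gKer d μ σ y x ∂ν :=
      funext hDens
    rw [heq]
    exact fun y => ((hasFDerivAt_I0 hσ y).differentiableAt.const_mul _)
  · intro y
    have hlogeq : (fun z => Real.log (gDens d μ σ ν z))
        = fun z => Real.log ((2 * Real.pi * σ ^ 2) ^ (-(d : ℝ) / 2))
            + Real.log (∫ x, gKer d μ σ z x ∂ν) := by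
      funext z; rw [hDens z, Real.log_mul hC.ne' (hI0 z).ne']
    rw [hlogeq]
    have hF := hasFDerivAt_I0 (μ := μ) (ν := ν) hσ y
    have hlog := (Real.hasDerivAt_log (hI0 y).ne').comp_hasFDerivAt y hF
    have hconst := hlog.const_add (Real.log ((2 * Real.pi * σ ^ 2) ^ (-(d : ℝ) / 2)))
    have hsmul : (∫ x, gKer d μ σ y x ∂ν)⁻¹ • innerSL ℝ (∫ x, gDer d μ σ y x ∂ν)
        = innerSL ℝ ((∫ x, gKer d μ σ y x ∂ν)⁻¹ • ∫ x, gDer d μ σ y x ∂ν) := by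
      ext w
      simp only [ContinuousLinearMap.smul_apply, innerSL_apply_apply, smul_eq_mul]
      rw [real_inner_smul_left]
    rw [hsmul] at hconst
    have hgrad : HasGradientAt (fun z => Real.log ((2 * Real.pi * σ ^ 2) ^ (-(d : ℝ) / 2))
          + Real.log (∫ x, gKer d μ σ z x ∂ν))
        ((∫ x, gKer d μ σ y x ∂ν)⁻¹ • ∫ x, gDer d μ σ y x ∂ν) y := by
      rw [hasGradientAt_iff_hasFDerivAt]
      refine hconst.congr_fderiv ?_
      ext w; rfl
    rw [hgrad.gradient, integral_gDer_eq hμ hσ y, gPostMean]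
    rw [smul_comm ((∫ x, gKer d μ σ y x ∂ν)⁻¹) ((σ^2:ℝ)⁻¹)]
    congr 1
    rw [smul_sub, inv_smul_smul₀ (hI0 y).ne', smul_comm]

end
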